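/- The recursive algorithm M defined by M(x) = -x for x < 0, and M(x) = M(x - M(x-1))/2 for x ≥ 0, terminates on all real inputs; moreover, whenever M(x) is defined, M(x) > 0. -/
import Mathlib


/-- The computation graph of Erickson's algorithm `M`:
`M(x) = -x` for `x < 0`, and `M(x) = M(x - M(x-1))/2` for `x ≥ 0`.
`MGraph x y` means the recursive computation of `M` on input `x`
terminates with output `y`. -/
inductive MGraph : ℝ → ℝ → Prop
  | neg (x : ℝ) : x < 0 → MGraph x (-x)
  | nonneg (x y z : ℝ) : 0 ≤ x → MGraph (x - 1) y → MGraph (x - y) z →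
      MGraph x (z / 2)

/-- Whenever `M(x)` is defined, its value is positive. -/
lemma MGraph.pos : ∀ x y : ℝ, MGraph x y → 0 < y := by
  intro x y h
  induction h with
  | neg x hx => linarith
  | nonneg x y z hx _ _ _ hz => linarith

/-- The invariant: `M` is defined on a right-neighborhood of `x` and is
linear with slope `-1` there. -/
def MP (x : ℝ) : Prop :=
  ∃ c ε : ℝ, 0 < ε ∧ ∀ t : ℝ, x ≤ t → t < x + ε → MGraph t (c - (t - x))

lemma MP_neg {x : ℝ} (hx : x < 0) : MP x := by
  refine ⟨-x, -x, by linarith, fun t ht ht' => ?_⟩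
  have : MGraph t (-t) := MGraph.neg t (by linarith)
  have : (-x - (t - x)) = -t := by ring
  rw [this]
  exact MGraph.neg t (by linarith)

lemma MP_step (x : ℝ) (H : ∀ t : ℝ, t < x → MP t) :
    ∃ ε : ℝ, 0 < ε ∧ ∀ t : ℝ, t < x + ε → MP t := by
  rcases lt_or_ge x 0 with hx | hx
  · exact ⟨-x, by linarith, fun t ht => MP_neg (by linarith)⟩
  · obtain ⟨c₁, ε₁, hε₁, h₁⟩ := H (x - 1) (by linarith)
    have hc₁ : 0 < c₁ := by
      have := h₁ (x - 1) le_rfl (by linarith)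
      simpa using MGraph.pos _ _ this
    obtain ⟨c₂, ε₂, hε₂, h₂⟩ := H (x - c₁) (by linarith)
    set ε := min ε₁ (min (ε₂ / 2) (c₁ / 2)) with hε
    have hεpos : 0 < ε := by
      apply lt_min (by linarith)
      exact lt_min (by linarith) (by linarith)
    have hεε₁ : ε ≤ ε₁ := min_le_left _ _
    have hεε₂ : ε ≤ ε₂ / 2 := le_trans (min_le_right _ _) (min_le_left _ _)
    have hεc₁ : ε ≤ c₁ / 2 := le_trans (min_le_right _ _) (min_le_right _ _)
    -- key claim: on [x, x+ε), M is defined with value c₂/2 - (t - x)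
    have Q : ∀ t : ℝ, x ≤ t → t < x + ε → MGraph t (c₂ / 2 - (t - x)) := by
      intro t ht ht'
      have hy : MGraph (t - 1) (c₁ - (t - x)) := by
        have := h₁ (t - 1) (by linarith) (by linarith)
        have e : (c₁ - (t - 1 - (x - 1))) = c₁ - (t - x) := by ring
        rwa [e] at this
      have hz : MGraph (t - (c₁ - (t - x))) (c₂ - 2 * (t - x)) := by
        have := h₂ (t - (c₁ - (t - x))) (by linarith) (by linarith)
        have e : (c₂ - (t - (c₁ - (t - x)) - (x - c₁))) = c₂ - 2 * (t - x) := by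
          ring
        rwa [e] at this
      have := MGraph.nonneg t (c₁ - (t - x)) (c₂ - 2 * (t - x)) (by linarith) hy hz
      have e : (c₂ - 2 * (t - x)) / 2 = c₂ / 2 - (t - x) := by ring
      rwa [e] at this
    refine ⟨ε, hεpos, fun t ht => ?_⟩
    rcases lt_or_ge t x with htx | htx
    · exact H t htx
    · refine ⟨c₂ / 2 - (t - x), x + ε - t, by linarith, fun u hu hu' => ?_⟩
      have := Q u (by linarith) (by linarith)
      have e : (c₂ / 2 - (t - x) - (u - t)) = c₂ / 2 - (u - x) := by ring
      rwa [e]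

lemma MP_all (x : ℝ) : MP x := by
  by_contra hx
  have hne : {z : ℝ | ¬ MP z}.Nonempty := ⟨x, hx⟩
  have hbdd : BddBelow {z : ℝ | ¬ MP z} := by
    refine ⟨0, fun z hz => ?_⟩
    by_contra h
    exact hz (MP_neg (by linarith [lt_of_not_ge h]))
  set s := sInf {z : ℝ | ¬ MP z} with hs
  have hbelow : ∀ t : ℝ, t < s → MP t := by
    intro t ht
    by_contra h
    exact absurd (csInf_le hbdd h) (not_le.mpr ht)
  obtain ⟨ε, hεpos, hstep⟩ := MP_step s hbelow
  have : s + ε ≤ s := le_csInf hne (fun z hz => by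
    by_contra h
    exact hz (hstep z (lt_of_not_ge h)))
  linarith

/-- `M` terminates on every real input, and whenever `M(x)` is defined,
`M(x) > 0`. -/
theorem M_total_and_pos :
    (∀ x : ℝ, ∃ y : ℝ, MGraph x y) ∧ (∀ x y : ℝ, MGraph x y → 0 < y) := by
  constructor
  · intro x
    obtain ⟨c, ε, hε, h⟩ := MP_all x
    exact ⟨c - (x - x), h x le_rfl (by linarith)⟩
  · exact MGraph.pos
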